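/- Let P be a Fractran program, d the lcm of its denominators, and S_P : ℕ → Prop the 'produces at position n' predicate defined corecursively following the stream specification: S_P(n) holds iff, with m = φ(n+1), either a'_m is undefined and (⌊n/d⌋ = 0 or S_P(n − d)), or a'_m is defined and S_P(⌊n/d⌋·a'_m + o_m − 1). Then S_P(n) holds for all n ∈ ℕ if and only if P halts on every positive integer. -/

import Mathlib

/-- One step of a Fractran program `P` on input `n`: multiply `n` by the first
fraction in the list whose product with `n` is an integer; `none` if no such fraction. -/
def fracStep (P : List ℚ) (n : ℕ) : Option ℕ :=
  ((P.map (fun q => (n : ℚ) * q)).find? (fun x => x.den == 1)).map (fun x => x.num.toNat)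

/-- `i`-fold iteration of the partial Fractran step function. -/
def fracIter (P : List ℚ) : ℕ → ℕ → Option ℕ
  | 0, n => some n
  | i + 1, n => (fracStep P n).bind (fracIter P i)

/-- `d`: the least common multiple of the denominators of the program. -/
def fracD (P : List ℚ) : ℕ := (P.map (fun q => q.den)).foldr Nat.lcm 1

/-- `a'_n = a_i · (d / b_i)` for the first fraction `a_i/b_i` of `P` such that
`n · a_i/b_i` is an integer; `none` if no such fraction exists. -/
def fracA' (P : List ℚ) (n : ℕ) : Option ℕ :=
  (P.find? (fun q => ((n : ℚ) * q).den == 1)).map (fun q => q.num.toNat * (fracD P / q.den))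

/-- `o_n = n · a_i/b_i` for the first fraction `a_i/b_i` of `P` such that
`n · a_i/b_i` is an integer; `none` if no such fraction exists. -/
def fracO (P : List ℚ) (n : ℕ) : Option ℕ :=
  (P.find? (fun q => ((n : ℚ) * q).den == 1)).map (fun q => ((n : ℚ) * q).num.toNat)

/-- `φ(n)`: the unique element of `{1, …, d}` congruent to `n` modulo `d`. -/
def phi (d n : ℕ) : ℕ := (n - 1) % d + 1

/-- The productivity predicate of the stream specification induced by `P`:
`S_P(n)` is the least predicate closed under the clauses of the position-wise
unfolding of the specification (with `m = φ(n+1)`). -/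
inductive SP (P : List ℚ) : ℕ → Prop where
  | base (n : ℕ) (hu : fracA' P (phi (fracD P) (n + 1)) = none)
      (h0 : n / fracD P = 0) : SP P n
  | stepUndef (n : ℕ) (hu : fracA' P (phi (fracD P) (n + 1)) = none)
      (h0 : 0 < n / fracD P) (ih : SP P (n - fracD P)) : SP P n
  | stepDef (n a o : ℕ) (ha : fracA' P (phi (fracD P) (n + 1)) = some a)
      (ho : fracO P (phi (fracD P) (n + 1)) = some o)
      (ih : SP P (n / fracD P * a + o - 1)) : SP P n

/-!
Write `n + 1 = ⌊n/d⌋·d + m` with `m = φ(n+1)`. Every denominator of `P` divides `d`, so a fraction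
of `P` applies to `n + 1` exactly when it applies to `m`; if it is `a/b`, the Fractran step sends
`n + 1` to `⌊n/d⌋·a'_m + o_m`, and `o_m ≥ 1` when all fractions are positive. Hence the `stepDef`
clause of `S_P(n)` is one Fractran step from `n + 1`, while the undefined clauses are the halting
case (the descent `n, n - d, n - 2d, …` keeps `m` fixed). So `S_P(n)` holds iff `P` halts on `n + 1`.
-/

lemma Rat.natCast_mul_den_eq_one_iff {q : ℚ} {k : ℕ} : ((k : ℚ) * q).den = 1 ↔ q.den ∣ k := by
  constructor
  · intro h
    have hint : (k : ℚ) * q = ((k : ℚ) * q).num := ((Rat.den_eq_one_iff _).1 h).symm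
    have hz : (k : ℤ) * q.num = ((k : ℚ) * q).num * q.den := by
      exact_mod_cast (by rw [← Rat.mul_den_eq_num q, ← mul_assoc, ← hint] :
        (k : ℚ) * q.num = ((k : ℚ) * q).num * q.den)
    have hcop : IsCoprime (q.den : ℤ) q.num := by
      rw [Int.isCoprime_iff_gcd_eq_one]; exact q.reduced.symm
    exact Int.natCast_dvd_natCast.1 (hcop.dvd_of_dvd_mul_right ⟨_, hz.trans (mul_comm _ _)⟩)
  · rintro ⟨c, rfl⟩
    rw [Nat.cast_mul, mul_comm, ← mul_assoc, Rat.mul_den_eq_num]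
    exact_mod_cast Rat.den_intCast (q.num * c)

lemma Rat.natCast_mul_num_toNat {q : ℚ} (hq : 0 < q) {k : ℕ} (h : q.den ∣ k) :
    ((k : ℚ) * q).num.toNat = k / q.den * q.num.toNat := by
  obtain ⟨c, rfl⟩ := h
  obtain ⟨p, hp⟩ := Int.eq_ofNat_of_zero_le (Rat.num_pos.2 hq).le
  rw [Nat.cast_mul, mul_comm, ← mul_assoc, Rat.mul_den_eq_num, hp,
    Nat.mul_div_cancel_left _ q.den_pos]
  norm_cast
  exact Nat.mul_comm p c

lemma fracD_pos (P : List ℚ) : 0 < fracD P := by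
  induction P with
  | nil => simp [fracD]
  | cons q P ih => exact Nat.lcm_pos q.pos ih

lemma den_dvd_fracD {P : List ℚ} {q : ℚ} (h : q ∈ P) : q.den ∣ fracD P := by
  induction P with
  | nil => simp at h
  | cons p P ih =>
    rcases List.mem_cons.1 h with rfl | h
    · exact Nat.dvd_lcm_left _ _
    · exact (ih h).trans (Nat.dvd_lcm_right _ _)

lemma phi_pos (d n : ℕ) : 0 < phi d n := Nat.succ_pos _

lemma add_one_eq_div_mul_add_phi (d n : ℕ) : n + 1 = n / d * d + phi d (n + 1) := by
  rw [phi, Nat.add_sub_cancel, ← Nat.add_assoc, Nat.div_add_mod' n d]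

lemma phi_add_one_modEq (d n : ℕ) : phi d (n + 1) ≡ n + 1 [MOD d] := by
  rw [phi, Nat.add_sub_cancel]
  exact (Nat.mod_modEq n d).add_right 1

lemma phi_sub_add_one {d n : ℕ} (h : d ≤ n) : phi d (n - d + 1) = phi d (n + 1) := by
  rw [phi, phi, Nat.add_sub_cancel, Nat.add_sub_cancel, Nat.mod_eq_sub_mod h]

def firstApplicable (P : List ℚ) (n : ℕ) : Option ℚ :=
  P.find? fun q => ((n : ℚ) * q).den == 1

lemma fracStep_eq_map (P : List ℚ) (n : ℕ) :
    fracStep P n = (firstApplicable P n).map fun q => ((n : ℚ) * q).num.toNat := by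
  rw [fracStep, List.find?_map, Option.map_map]
  rfl

lemma fracA'_eq_map (P : List ℚ) (n : ℕ) :
    fracA' P n = (firstApplicable P n).map fun q => q.num.toNat * (fracD P / q.den) :=
  rfl

lemma fracO_eq_map (P : List ℚ) (n : ℕ) :
    fracO P n = (firstApplicable P n).map fun q => ((n : ℚ) * q).num.toNat :=
  rfl

lemma firstApplicable_phi (P : List ℚ) (n : ℕ) :
    firstApplicable P (phi (fracD P) (n + 1)) = firstApplicable P (n + 1) := by
  refine List.find?_congr fun q hq => ?_
  simp only [beq_eq_decide, Rat.natCast_mul_den_eq_one_iff,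
    (phi_add_one_modEq (fracD P) n).dvd_iff (den_dvd_fracD hq)]

lemma fracStep_eq_none_iff (P : List ℚ) (n : ℕ) :
    fracStep P (n + 1) = none ↔ fracA' P (phi (fracD P) (n + 1)) = none := by
  rw [fracStep_eq_map, fracA'_eq_map, firstApplicable_phi, Option.map_eq_none_iff,
    Option.map_eq_none_iff]

lemma fracStep_eq_some {P : List ℚ} (hpos : ∀ q ∈ P, 0 < q) {n a o : ℕ}
    (ha : fracA' P (phi (fracD P) (n + 1)) = some a)
    (ho : fracO P (phi (fracD P) (n + 1)) = some o) :
    fracStep P (n + 1) = some (n / fracD P * a + o) := by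
  set m := phi (fracD P) (n + 1)
  rw [fracA'_eq_map] at ha
  obtain ⟨q, hq, rfl⟩ := Option.map_eq_some_iff.1 ha
  rw [fracO_eq_map, hq, Option.map_some, Option.some_inj] at ho
  subst ho
  have hmem : q ∈ P := List.mem_of_find?_eq_some hq
  have hqd : q.den ∣ fracD P := den_dvd_fracD hmem
  have hqm : q.den ∣ m := Rat.natCast_mul_den_eq_one_iff.1 (by simpa using List.find?_some hq)
  have hqn : q.den ∣ n + 1 := ((phi_add_one_modEq _ n).dvd_iff hqd).1 hqm
  have hdiv : (n + 1) / q.den = n / fracD P * (fracD P / q.den) + m / q.den := by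
    conv_lhs => rw [add_one_eq_div_mul_add_phi (fracD P) n]
    rw [Nat.add_div_of_dvd_right (hqd.mul_left _), Nat.mul_div_assoc _ hqd]
  rw [fracStep_eq_map, ← firstApplicable_phi, hq, Option.map_some,
    Rat.natCast_mul_num_toNat (hpos q hmem) hqn, Rat.natCast_mul_num_toNat (hpos q hmem) hqm, hdiv,
    Option.some_inj]
  ring

lemma fracO_pos {P : List ℚ} (hpos : ∀ q ∈ P, 0 < q) {m o : ℕ} (hm : 0 < m)
    (ho : fracO P m = some o) : 0 < o := by
  rw [fracO_eq_map] at ho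
  obtain ⟨q, hq, rfl⟩ := Option.map_eq_some_iff.1 ho
  have hq0 := hpos q (List.mem_of_find?_eq_some hq)
  exact Int.lt_toNat.2 (Rat.num_pos.2 (by positivity))

lemma SP_of_fracA'_eq_none (P : List ℚ) (n : ℕ)
    (hu : fracA' P (phi (fracD P) (n + 1)) = none) : SP P n := by
  induction n using Nat.strong_induction_on with
  | _ n ih =>
    rcases Nat.eq_zero_or_pos (n / fracD P) with h0 | h0
    · exact SP.base n hu h0
    · have hle : fracD P ≤ n := (Nat.div_pos_iff.1 h0).2
      refine SP.stepUndef n hu h0 (ih _ (Nat.sub_lt ((fracD_pos P).trans_le hle) (fracD_pos P)) ?_)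
      rwa [phi_sub_add_one hle]

lemma SP_of_fracIter_eq_none {P : List ℚ} (hpos : ∀ q ∈ P, 0 < q) {i n : ℕ}
    (h : fracIter P i (n + 1) = none) : SP P n := by
  induction i generalizing n with
  | zero => simp [fracIter] at h
  | succ i ih =>
    cases hq : firstApplicable P (phi (fracD P) (n + 1)) with
    | none => exact SP_of_fracA'_eq_none P n (by simp [fracA'_eq_map, hq])
    | some q =>
      set m := phi (fracD P) (n + 1)
      have ha : fracA' P m = some (q.num.toNat * (fracD P / q.den)) := by simp [fracA'_eq_map, hq]
      have ho : fracO P m = some ((m * q).num.toNat) := by simp [fracO_eq_map, hq]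
      refine SP.stepDef n _ _ ha ho (ih ?_)
      rwa [Nat.sub_add_cancel (le_add_left (fracO_pos hpos (phi_pos _ _) ho)),
        ← Option.bind_some (f := fracIter P i), ← fracStep_eq_some hpos ha ho]

lemma SP.exists_fracIter_eq_none {P : List ℚ} (hpos : ∀ q ∈ P, 0 < q) {n : ℕ} (h : SP P n) :
    ∃ i, fracIter P i (n + 1) = none := by
  induction h with
  | base n hu _ | stepUndef n hu _ _ _ =>
    exact ⟨1, by simp [fracIter, (fracStep_eq_none_iff P n).2 hu]⟩
  | stepDef n a o ha ho _ ih =>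
    obtain ⟨i, hi⟩ := ih
    rw [Nat.sub_add_cancel (le_add_left (fracO_pos hpos (phi_pos _ _) ho))] at hi
    exact ⟨i + 1, by rwa [fracIter, fracStep_eq_some hpos ha ho, Option.bind_some]⟩

/-- Lemma `lem:red:fractran:specs`: the stream specification induced by `P` is
productive (produces at every position) iff `P` halts on every positive integer. -/
theorem fractran_spec_productive_iff_halting (P : List ℚ) (hpos : ∀ q ∈ P, 0 < q) :
    (∀ n : ℕ, SP P n) ↔ (∀ n : ℕ, 0 < n → ∃ i, fracIter P i n = none) := by
  refine ⟨fun h n hn => ?_, fun h n => ?_⟩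
  · obtain ⟨k, rfl⟩ := Nat.exists_eq_add_one_of_ne_zero hn.ne'
    exact (h k).exists_fracIter_eq_none hpos
  · obtain ⟨i, hi⟩ := h (n + 1) n.succ_pos
    exact SP_of_fracIter_eq_none hpos hi
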